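/- arXiv:1105.3249 — 7 statements merged into one kernel-verified Lean document; each statement's English description precedes it below -/
import Mathlib

section
/- Every synchronizing irreducible subshift is λ-synchronizing: if Λ is irreducible and possesses an intrinsically synchronizing word, then for every word η of length l and every k ≥ l there exists a k-synchronizing word ν such that ην is admissible and ην is (k−l)-synchronizing. -/
open List

variable {A : Type*}

/-- A subshift: a closed, shift-invariant subset of `A^ℤ` (with `A` discrete). -/
def IsSubshift [TopologicalSpace A] (Λ : Set (ℤ → A)) : Prop :=
  IsClosed Λ ∧ (∀ x ∈ Λ, (fun i => x (i + 1)) ∈ Λ) ∧ (∀ x ∈ Λ, (fun i => x (i - 1)) ∈ Λ)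

/-- `w` is an admissible word of `Λ`, i.e. `w ∈ B_*(Λ)`. -/
def Adm (Λ : Set (ℤ → A)) (w : List A) : Prop :=
  ∃ x ∈ Λ, ∃ n : ℤ, ∀ i : Fin w.length, x (n + (i : ℕ)) = w.get i

/-- `Γ_l^-(μ)`: the set of admissible words `ν` of length `l` with `νμ` admissible. -/
def Gamma (Λ : Set (ℤ → A)) (l : ℕ) (μ : List A) : Set (List A) :=
  {ν | ν.length = l ∧ Adm Λ ν ∧ Adm Λ (ν ++ μ)}

/-- `μ` is an `l`-synchronizing word of `Λ`: `Γ_l^-(μ) = Γ_l^-(μω)` for all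
`ω ∈ Γ_*^+(μ)`.  Membership in `S_l(Λ)`. -/
def LSync (Λ : Set (ℤ → A)) (l : ℕ) (μ : List A) : Prop :=
  Adm Λ μ ∧ ∀ ω : List A, Adm Λ (μ ++ ω) → Gamma Λ l μ = Gamma Λ l (μ ++ ω)

/-- `ω` is an intrinsically synchronizing word of `Λ`. -/
def IntrSync (Λ : Set (ℤ → A)) (ω : List A) : Prop :=
  Adm Λ ω ∧ ∀ μ ν : List A, Adm Λ μ → Adm Λ ν → Adm Λ (μ ++ ω) → Adm Λ (ω ++ ν) →
    Adm Λ (μ ++ ω ++ ν)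

/-- Irreducibility of the subshift `Λ`. -/
def IrredShift (Λ : Set (ℤ → A)) : Prop :=
  ∀ μ ν : List A, Adm Λ μ → Adm Λ ν → ∃ ξ : List A, Adm Λ (μ ++ ξ ++ ν)

/-- `Λ` is `λ`-synchronizing: it is irreducible and for every `η ∈ B_l(Λ)` and `k ≥ l`
there is `ν ∈ S_k(Λ)` with `ην ∈ S_{k-l}(Λ)`. -/
def LambdaSync (Λ : Set (ℤ → A)) : Prop :=
  IrredShift Λ ∧ ∀ (η : List A) (k : ℕ), Adm Λ η → η.length ≤ k →
    ∃ ν : List A, LSync Λ k ν ∧ LSync Λ (k - η.length) (η ++ ν)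

/-! If `ω` is intrinsically synchronizing, every admissible word ending in `ω` is
`m`-synchronizing for every `m`: a word that can precede `αω` can still precede `αωω'`,
because the junction at `ω` imposes no constraint. Irreducibility supplies `ξ` with `ηξω`
admissible, and `ν = ξω` works for every `k`. -/

theorem Adm.of_infix {Λ : Set (ℤ → A)} {u w : List A} (hw : Adm Λ w) (hu : u <:+: w) :
    Adm Λ u := by
  obtain ⟨s, t, rfl⟩ := hu
  obtain ⟨x, hx, n, hn⟩ := hw
  refine ⟨x, hx, n + s.length, fun i => ?_⟩
  have hi : s.length + i < (s ++ u ++ t).length := by simp only [length_append]; omega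
  have := hn ⟨s.length + i, hi⟩
  simp only [get_eq_getElem, append_assoc, getElem_append_right (Nat.le_add_right _ _),
    Nat.add_sub_cancel_left, getElem_append_left i.isLt] at this
  simpa [add_assoc] using this

theorem IntrSync.lsync_append {Λ : Set (ℤ → A)} {ω : List A} (hω : IntrSync Λ ω) (m : ℕ)
    {α : List A} (hαω : Adm Λ (α ++ ω)) : LSync Λ m (α ++ ω) := by
  refine ⟨hαω, fun ω' hext => Set.Subset.antisymm ?_ ?_⟩
  · rintro μ ⟨hlen, hμ, hμαω⟩
    refine ⟨hlen, hμ, ?_⟩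
    have hμα : Adm Λ (μ ++ α) := hμαω.of_infix ⟨[], ω, by simp⟩
    have hω' : Adm Λ ω' := hext.of_infix (suffix_append _ _).isInfix
    have hωω' : Adm Λ (ω ++ ω') := hext.of_infix ⟨α, [], by simp⟩
    simpa only [append_assoc] using
      hω.2 (μ ++ α) ω' hμα hω' (by simpa only [append_assoc] using hμαω) hωω'
  · rintro μ ⟨hlen, hμ, hμext⟩
    exact ⟨hlen, hμ, hμext.of_infix ⟨[], ω', by simp⟩⟩

theorem synchronizing_is_lambdaSync_general
    (Λ : Set (ℤ → A)) (hirr : IrredShift Λ)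
    (hsync : ∃ ω : List A, IntrSync Λ ω) :
    ∀ (η : List A) (k : ℕ), Adm Λ η → η.length ≤ k →
      ∃ ν : List A, LSync Λ k ν ∧ Adm Λ (η ++ ν) ∧ LSync Λ (k - η.length) (η ++ ν) := by
  intro η k hη _
  obtain ⟨ω, hω⟩ := hsync
  obtain ⟨ξ, hηξω⟩ := hirr η ω hη hω.1
  rw [append_assoc] at hηξω
  refine ⟨ξ ++ ω, hω.lsync_append k (hηξω.of_infix (suffix_append _ _).isInfix), hηξω, ?_⟩
  rw [← append_assoc] at hηξω ⊢
  exact hω.lsync_append _ hηξω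

/-- a synchronizing (irreducible with an intrinsically synchronizing word)
subshift is `λ`-synchronizing. -/
theorem synchronizing_is_lambdaSync [TopologicalSpace A] [DiscreteTopology A] [Finite A]
    (Λ : Set (ℤ → A)) (hΛ : IsSubshift Λ) (hirr : IrredShift Λ)
    (hsync : ∃ ω : List A, IntrSync Λ ω) :
    ∀ (η : List A) (k : ℕ), Adm Λ η → η.length ≤ k →
      ∃ ν : List A, LSync Λ k ν ∧ Adm Λ (η ++ ν) ∧ LSync Λ (k - η.length) (η ++ ν) :=
  synchronizing_is_lambdaSync_general Λ hirr hsync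
end

section
/- In a λ-synchronizing subshift Λ, for every l-synchronizing word μ there exists an (l+1)-synchronizing word μ' such that Γ_l^-(μ) = Γ_l^-(μ'). -/
open List

variable {A : Type*}

theorem exists_lSync_succ_general
    (Λ : Set (ℤ → A)) (hls : LambdaSync Λ)
    (l : ℕ) (μ : List A) (hμ : LSync Λ l μ) :
    ∃ μ' : List A, LSync Λ (l + 1) μ' ∧ Gamma Λ l μ = Gamma Λ l μ' := by
  obtain ⟨ν, -, hμν⟩ := hls.2 μ (μ.length + (l + 1)) hμ.1 (by omega)
  rw [Nat.add_sub_cancel_left] at hμν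
  exact ⟨μ ++ ν, hμν, hμ.2 ν hμν.1⟩

/-- in a `λ`-synchronizing subshift, every `l`-synchronizing word `μ`
is `l`-past equivalent to some `(l+1)`-synchronizing word `μ'`. -/
theorem exists_lSync_succ [TopologicalSpace A] [DiscreteTopology A] [Finite A]
    (Λ : Set (ℤ → A)) (hΛ : IsSubshift Λ) (hls : LambdaSync Λ)
    (l : ℕ) (μ : List A) (hμ : LSync Λ l μ) :
    ∃ μ' : List A, LSync Λ (l + 1) μ' ∧ Gamma Λ l μ = Gamma Λ l μ' :=
  exists_lSync_succ_general Λ hls l μ hμ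
end

section
/- In a λ-synchronizing subshift Λ, for every l-synchronizing word μ there exist a symbol β and an (l+1)-synchronizing word ν such that βν is admissible and Γ_l^-(μ) = Γ_l^-(βν). -/
/-!
Write `μ = βt`. The λ-synchronizing property, applied to `η = μ` and `k = |μ| + l + 1`,
gives a `k`-synchronizing word `ω` with `μω` admissible. Prepending a word of length at most
`k - (l + 1)` to a `k`-synchronizing word leaves an `(l + 1)`-synchronizing one, so `ν = tω`
is `(l + 1)`-synchronizing, and `Γ_l^-(μ) = Γ_l^-(μω) = Γ_l^-(βν)` because `μ` is
`l`-synchronizing. When `μ` is empty, take any `(l + 1)`-synchronizing `ν` and any symbol `β`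
with `βν` admissible.
-/

open List

variable {A : Type*}

variable {Λ : Set (ℤ → A)}

lemma Adm.of_append_left {u v : List A} (h : Adm Λ (u ++ v)) : Adm Λ u := by
  obtain ⟨x, hx, n, hw⟩ := h
  refine ⟨x, hx, n, fun ⟨i, hi⟩ => ?_⟩
  have := hw ⟨i, by grind⟩
  simpa only [List.get_eq_getElem, List.getElem_append_left hi] using this

lemma Adm.of_append_right {u v : List A} (h : Adm Λ (u ++ v)) : Adm Λ v := by
  obtain ⟨x, hx, n, hw⟩ := h
  refine ⟨x, hx, n + u.length, fun ⟨i, hi⟩ => ?_⟩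
  have := hw ⟨u.length + i, by grind⟩
  simp only [List.get_eq_getElem, List.getElem_append_right (Nat.le_add_right _ _),
    Nat.add_sub_cancel_left] at this ⊢
  rw [← this]
  push_cast
  ring_nf

lemma Adm.exists_append_left {w : List A} (h : Adm Λ w) (m : ℕ) :
    ∃ δ : List A, δ.length = m ∧ Adm Λ (δ ++ w) := by
  obtain ⟨x, hx, n, hw⟩ := h
  set δ : List A := (List.range m).map fun j : ℕ => x (n - m + j) with hδ
  have hδlen : δ.length = m := by simp [hδ]
  refine ⟨δ, hδlen, x, hx, n - m, fun ⟨i, hi⟩ => ?_⟩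
  simp only [List.get_eq_getElem]
  rcases lt_or_ge i m with him | him
  · rw [List.getElem_append_left (by omega)]
    simp [hδ]
  · have := hw ⟨i - δ.length, by grind⟩
    rw [List.get_eq_getElem] at this
    rw [List.getElem_append_right (by omega), ← this]
    congr 1
    push_cast [hδlen, him]
    ring

lemma Adm.exists_cons {w : List A} (h : Adm Λ w) : ∃ β : A, Adm Λ (β :: w) := by
  obtain ⟨δ, hδlen, hδ⟩ := h.exists_append_left 1
  obtain ⟨β, rfl⟩ := List.length_eq_one_iff.mp hδlen
  exact ⟨β, hδ⟩

lemma gamma_append_subset (l : ℕ) (u v : List A) : Gamma Λ l (u ++ v) ⊆ Gamma Λ l u :=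
  fun γ ⟨hγl, hγ, hγuv⟩ => ⟨hγl, hγ, (by simpa only [List.append_assoc] using hγuv :
    Adm Λ ((γ ++ u) ++ v)).of_append_left⟩

/-- The left context is padded to length exactly `k`, so that it lies in `Γ_k^-(ω)`. -/
lemma LSync.adm_append {k : ℕ} {ω ρ τ : List A} (hω : LSync Λ k ω) (hρ : ρ.length ≤ k)
    (hρω : Adm Λ (ρ ++ ω)) (hωτ : Adm Λ (ω ++ τ)) : Adm Λ (ρ ++ ω ++ τ) := by
  obtain ⟨δ, hδlen, hδρω⟩ := hρω.exists_append_left (k - ρ.length)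
  rw [← List.append_assoc] at hδρω
  have hmem : δ ++ ρ ∈ Gamma Λ k ω :=
    ⟨by grind, hδρω.of_append_left, hδρω⟩
  rw [hω.2 τ hωτ] at hmem
  have h := hmem.2.2
  simp only [List.append_assoc] at h ⊢
  exact h.of_append_right

lemma LSync.append_left {k l : ℕ} {ρ ω : List A} (hω : LSync Λ k ω) (hρω : Adm Λ (ρ ++ ω))
    (hl : ρ.length + l ≤ k) : LSync Λ l (ρ ++ ω) := by
  refine ⟨hρω, fun τ hτ => (gamma_append_subset l _ τ).antisymm' ?_⟩
  rintro γ ⟨hγl, hγ, hγρω⟩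
  have hωτ : Adm Λ (ω ++ τ) := by
    rw [List.append_assoc] at hτ
    exact hτ.of_append_right
  have h := hω.adm_append (ρ := γ ++ ρ) (by grind)
    (by simpa only [List.append_assoc] using hγρω) hωτ
  exact ⟨hγl, hγ, by simpa only [List.append_assoc] using h⟩

theorem exists_symbol_lSync_succ_general
    (Λ : Set (ℤ → A)) (hls : LambdaSync Λ)
    (l : ℕ) (μ : List A) (hμ : LSync Λ l μ) :
    ∃ (β : A) (ν : List A), LSync Λ (l + 1) ν ∧ Adm Λ (β :: ν) ∧
      Gamma Λ l μ = Gamma Λ l (β :: ν) := by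
  cases μ with
  | nil =>
    obtain ⟨ν, hν, -⟩ := hls.2 [] (l + 1) hμ.1 (Nat.zero_le _)
    obtain ⟨β, hβν⟩ := hν.1.exists_cons
    exact ⟨β, ν, hν, hβν, hμ.2 (β :: ν) hβν⟩
  | cons β t =>
    obtain ⟨ω, hω, hμω⟩ := hls.2 (β :: t) (t.length + l + 2) hμ.1 (by simp; omega)
    have hβtω : Adm Λ (β :: (t ++ ω)) := hμω.1
    refine ⟨β, t ++ ω, hω.append_left (Adm.of_append_right (u := [β]) hβtω) (by omega),
      hβtω, hμ.2 ω hβtω⟩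

/-- in a `λ`-synchronizing subshift, for every `l`-synchronizing `μ`
there are a symbol `β` and an `(l+1)`-synchronizing word `ν` with `βν` admissible
and `Γ_l^-(μ) = Γ_l^-(βν)`. -/
theorem exists_symbol_lSync_succ [TopologicalSpace A] [DiscreteTopology A] [Finite A]
    (Λ : Set (ℤ → A)) (hΛ : IsSubshift Λ) (hls : LambdaSync Λ)
    (l : ℕ) (μ : List A) (hμ : LSync Λ l μ) :
    ∃ (β : A) (ν : List A), LSync Λ (l + 1) ν ∧ Adm Λ (β :: ν) ∧
      Gamma Λ l μ = Gamma Λ l (β :: ν) :=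
  exists_symbol_lSync_succ_general Λ hls l μ hμ
end

section
/- An irreducible subshift Λ is λ-synchronizing if and only if for every admissible word μ and every k ∈ ℕ there exists a k-synchronizing word ν such that μν is admissible. -/
open List

variable {A : Type*}

lemma adm_prefix {Λ : Set (ℤ → A)} {a b : List A} (h : Adm Λ (a ++ b)) : Adm Λ a := by
  obtain ⟨x, hx, n, hn⟩ := h
  refine ⟨x, hx, n, fun i => ?_⟩
  have hi : (i : ℕ) < (a ++ b).length := by
    have := i.isLt; simp only [List.length_append]; omega
  have := hn ⟨i, hi⟩
  simpa [List.get_eq_getElem, List.getElem_append_left] using this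

lemma adm_suffix {Λ : Set (ℤ → A)} {a b : List A} (h : Adm Λ (a ++ b)) : Adm Λ b := by
  obtain ⟨x, hx, n, hn⟩ := h
  refine ⟨x, hx, n + a.length, fun i => ?_⟩
  have hi : a.length + (i : ℕ) < (a ++ b).length := by
    have := i.isLt; simp only [List.length_append]; omega
  have h2 := hn ⟨a.length + i, hi⟩
  have h3 : (a ++ b)[a.length + (i:ℕ)]'hi = b[(i:ℕ)] := by
    rw [List.getElem_append_right (by omega)]
    congr 1; omega
  have harg : n + a.length + (i : ℕ) = n + ((a.length + i : ℕ) : ℤ) := by push_cast; ring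
  rw [List.get_eq_getElem] at h2 ⊢
  rw [harg, h2, h3]

lemma adm_extend_left {Λ : Set (ℤ → A)} {u : List A} (h : Adm Λ u) (d : ℕ) :
    ∃ w : List A, w.length = d ∧ Adm Λ (w ++ u) := by
  obtain ⟨x, hx, n, hn⟩ := h
  refine ⟨List.ofFn (fun i : Fin d => x (n - d + i)), by simp, x, hx, n - d, fun i => ?_⟩
  have hwl : (List.ofFn (fun i : Fin d => x (n - d + i))).length = d := by simp
  have hil : (i : ℕ) < d + u.length := by simpa using i.isLt
  rw [List.get_eq_getElem]
  rcases lt_or_ge (i : ℕ) d with hi | hi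
  · rw [List.getElem_append_left (by omega)]
    simp
  · have hi2 : (i : ℕ) - (List.ofFn (fun i : Fin d => x (n - d + i))).length < u.length := by
      rw [hwl]; omega
    rw [List.getElem_append_right (by omega)]
    have h2 := hn ⟨(i : ℕ) - d, by omega⟩
    rw [List.get_eq_getElem] at h2
    simp only [hwl]
    have harg : n - d + (i : ℕ) = n + (((i : ℕ) - d : ℕ) : ℤ) := by omega
    rw [harg, h2]

lemma lsync_mono {Λ : Set (ℤ → A)} {k k' : ℕ} (hkk : k ≤ k') {ν : List A}
    (h : LSync Λ k' ν) : LSync Λ k ν := by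
  refine ⟨h.1, fun ω hω => ?_⟩
  ext w
  constructor
  · rintro ⟨hlen, hadm, hadm2⟩
    obtain ⟨u, hul, huadm⟩ := adm_extend_left hadm2 (k' - k)
    have hmem : u ++ w ∈ Gamma Λ k' ν := by
      refine ⟨by simp [hul, hlen]; omega, adm_prefix (by rwa [List.append_assoc]), ?_⟩
      rwa [List.append_assoc]
    rw [h.2 ω hω] at hmem
    refine ⟨hlen, hadm, ?_⟩
    have := hmem.2.2
    rw [List.append_assoc] at this
    exact adm_suffix this
  · rintro ⟨hlen, hadm, hadm2⟩
    refine ⟨hlen, hadm, adm_prefix (a := w ++ ν) (b := ω) ?_⟩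
    rwa [List.append_assoc]

lemma lsync_extend {Λ : Set (ℤ → A)} {k : ℕ} {ν η : List A}
    (hν : LSync Λ k ν) (hadm : Adm Λ (η ++ ν)) (hk : η.length ≤ k) :
    LSync Λ (k - η.length) (η ++ ν) := by
  refine ⟨hadm, fun ω hω => ?_⟩
  ext w
  constructor
  · rintro ⟨hlen, hwadm, hadm2⟩
    have hνω : Adm Λ (ν ++ ω) := by
      rw [List.append_assoc] at hω
      exact adm_suffix hω
    have hmem : w ++ η ∈ Gamma Λ k ν := by
      refine ⟨by simp [hlen]; omega, adm_prefix (by rwa [List.append_assoc]), ?_⟩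
      rwa [List.append_assoc]
    rw [hν.2 ω hνω] at hmem
    refine ⟨hlen, hwadm, ?_⟩
    have := hmem.2.2
    simp only [List.append_assoc] at this ⊢
    exact this
  · rintro ⟨hlen, hwadm, hadm2⟩
    exact ⟨hlen, hwadm, adm_prefix (a := w ++ (η ++ ν)) (b := ω) (by rwa [List.append_assoc])⟩

/-- an irreducible subshift is `λ`-synchronizing iff for every
admissible word `μ` and every `k` there is a `k`-synchronizing `ν` with `μν` admissible. -/
theorem lambdaSync_iff [TopologicalSpace A] [DiscreteTopology A] [Finite A]
    (Λ : Set (ℤ → A)) (hΛ : IsSubshift Λ) (hirr : IrredShift Λ) :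
    LambdaSync Λ ↔
      ∀ (μ : List A) (k : ℕ), Adm Λ μ → ∃ ν : List A, LSync Λ k ν ∧ Adm Λ (μ ++ ν) := by
  constructor
  · intro h μ k hμ
    obtain ⟨ν, h1, h2⟩ := h.2 μ (max k μ.length) hμ (le_max_right _ _)
    exact ⟨ν, lsync_mono (le_max_left _ _) h1, h2.1⟩
  · intro h
    refine ⟨hirr, fun η k hη hk => ?_⟩
    obtain ⟨ν, hν, hadm⟩ := h η k hη
    exact ⟨ν, hν, lsync_extend hν hadm hk⟩
end

section
/- If a λ-graph system 𝔏 presenting a subshift Λ is ι-irreducible, then Λ is irreducible. -/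
open List

variable {A : Type*}

/-- A `λ`-graph system over the alphabet `A`: a labeled Bratteli diagram with
finite vertex sets `V l` and edge sets `E l` (edges from level `l` to level `l+1`),
a labeling, and surjective `ι`-maps, satisfying the local property (stated as a
label-wise counting identity, i.e. a label-preserving bijection), such that every
vertex has a successor and every vertex at level `l+1` has a predecessor. -/
structure LGS (A : Type*) where
  V : ℕ → Type*
  E : ℕ → Type*
  finV : ∀ l, Finite (V l)
  finE : ∀ l, Finite (E l)
  src : ∀ l, E l → V l
  tgt : ∀ l, E l → V (l + 1)
  lab : ∀ l, E l → A
  iota : ∀ l, V (l + 1) → V l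
  iota_surj : ∀ l, Function.Surjective (iota l)
  succ : ∀ (l : ℕ) (v : V l), ∃ e : E l, src l e = v
  pred : ∀ (l : ℕ) (v : V (l + 1)), ∃ e : E l, tgt l e = v
  local_property : ∀ (l : ℕ) (u : V l) (v : V (l + 2)) (α : A),
    Nat.card {e : E (l + 1) //
        tgt (l + 1) e = v ∧ iota l (src (l + 1) e) = u ∧ lab (l + 1) e = α}
      = Nat.card {e : E l //
        src l e = u ∧ tgt l e = iota (l + 1) v ∧ lab l e = α}

namespace LGS

variable {A : Type*}

/-- There is a labeled path in `G` starting at `v : V l`, labeled `w`, ending at `u : V l'`. -/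
def PathW (G : LGS A) : ∀ (l : ℕ), G.V l → List A → ∀ (l' : ℕ), G.V l' → Prop
  | l, v, [], l', u => ∃ h : l = l', h ▸ v = u
  | l, v, a :: w, l', u =>
      ∃ e : G.E l, G.src l e = v ∧ G.lab l e = a ∧ G.PathW (l + 1) (G.tgt l e) w l' u

/-- `G` presents the subshift `Λ`: the admissible words of `Λ` are exactly the labels of
finite labeled paths appearing somewhere in `G`. -/
def Presents (G : LGS A) (Λ : Set (ℤ → A)) : Prop :=
  ∀ w : List A, Adm Λ w ↔ ∃ (l : ℕ) (v : G.V l) (l' : ℕ) (u : G.V l'), G.PathW l v w l' u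

/-- Iterated `ι`-map `ι^n : V (l+n) → V l`. -/
def iotaN (G : LGS A) : ∀ (l n : ℕ), G.V (l + n) → G.V l
  | _, 0, v => v
  | l, n + 1, v => G.iotaN l n (G.iota (l + n) v)

/-- `G` is left-resolving: edges carrying the same label have distinct terminal vertices. -/
def LeftResolving (G : LGS A) : Prop :=
  ∀ (l : ℕ) (e f : G.E l), G.lab l e = G.lab l f → G.tgt l e = G.tgt l f → e = f

/-- The predecessor set `Γ_l^-(v)` of a vertex `v ∈ V l`: the words of length `l`
labeling paths from level `0` to `v`. -/
def PredSet (G : LGS A) (l : ℕ) (v : G.V l) : Set (List A) :=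
  {w | w.length = l ∧ ∃ v0 : G.V 0, G.PathW 0 v0 w l v}

/-- `G` is predecessor-separated. -/
def PredSeparated (G : LGS A) : Prop :=
  ∀ (l : ℕ) (u v : G.V l), G.PredSet l u = G.PredSet l v → u = v

/-- The word `w` leaves the vertex `v`. -/
def Leaves (G : LGS A) (l : ℕ) (v : G.V l) (w : List A) : Prop :=
  ∃ (l' : ℕ) (u : G.V l'), G.PathW l v w l' u

/-- The vertex `v ∈ V l` launches the word `w`: `w` leaves `v` and no other vertex of `V l`. -/
def Launches (G : LGS A) (l : ℕ) (v : G.V l) (w : List A) : Prop :=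
  G.Leaves l v w ∧ ∀ v' : G.V l, G.Leaves l v' w → v' = v

/-- `G` is a `λ`-synchronizing `λ`-graph system: every vertex launches some word. -/
def LambdaSyncSys (G : LGS A) : Prop :=
  ∀ (l : ℕ) (v : G.V l), ∃ w : List A, G.Launches l v w

/-- `G` is `ι`-irreducible. -/
def IotaIrred (G : LGS A) : Prop :=
  ∀ (l : ℕ) (v u : G.V l) (w : List A) (l' : ℕ) (t : G.V l'),
    G.PathW l u w l' t →
    ∃ (n : ℕ) (ξ : List A) (u' : G.V (l + n)) (t' : G.V (l' + n)),
      G.PathW l v ξ (l + n) u' ∧ G.iotaN l n u' = u ∧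
      G.PathW (l + n) u' w (l' + n) t' ∧ G.iotaN l' n t' = t

end LGS

/-! The local property lets every labeled path be lifted one level along `ι`, keeping its label.
Lifting the paths of `μ` and of `ν` far enough, `ν` is read from a vertex at the level where `μ`
ends, and `ι`-irreducibility then connects the end of `μ` to a vertex above the start of `ν`. -/

namespace LGS

variable {G : LGS A}

theorem exists_edge_lift {l : ℕ} (e : G.E l) {s : G.V (l + 2)}
    (hs : G.iota (l + 1) s = G.tgt l e) :
    ∃ e' : G.E (l + 1), G.tgt (l + 1) e' = s ∧ G.iota l (G.src (l + 1) e') = G.src l e ∧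
      G.lab (l + 1) e' = G.lab l e := by
  have hpos : 0 < Nat.card {e' : G.E (l + 1) // G.tgt (l + 1) e' = s ∧
      G.iota l (G.src (l + 1) e') = G.src l e ∧ G.lab (l + 1) e' = G.lab l e} := by
    rw [G.local_property]
    have := G.finE l
    exact Nat.card_pos_iff.2 ⟨⟨⟨e, rfl, hs.symm, rfl⟩⟩, inferInstance⟩
  obtain ⟨⟨e', he'⟩⟩ := (Nat.card_pos_iff.1 hpos).1
  exact ⟨e', he'⟩

theorem PathW.exists_lift {l l' : ℕ} {u : G.V l} {w : List A} {t : G.V l'}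
    (h : G.PathW l u w l' t) :
    ∃ (u' : G.V (l + 1)) (t' : G.V (l' + 1)),
      G.iota l u' = u ∧ G.PathW (l + 1) u' w (l' + 1) t' := by
  induction w generalizing l u with
  | nil =>
    obtain ⟨rfl, rfl⟩ := h
    obtain ⟨u', rfl⟩ := G.iota_surj l u
    exact ⟨u', u', rfl, rfl, rfl⟩
  | cons a w ih =>
    obtain ⟨e, rfl, rfl, htail⟩ := h
    obtain ⟨s, t', hs, htail'⟩ := ih htail
    obtain ⟨e', rfl, he', hlab⟩ := exists_edge_lift e hs
    exact ⟨G.src (l + 1) e', t', he', e', rfl, hlab, htail'⟩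

theorem PathW.exists_lift_add {l l' : ℕ} {u : G.V l} {w : List A} {t : G.V l'}
    (h : G.PathW l u w l' t) (k : ℕ) :
    ∃ (u' : G.V (l + k)) (t' : G.V (l' + k)), G.PathW (l + k) u' w (l' + k) t' := by
  induction k with
  | zero => exact ⟨u, t, h⟩
  | succ k ih =>
    obtain ⟨u', t', h'⟩ := ih
    obtain ⟨u'', t'', -, h''⟩ := h'.exists_lift
    exact ⟨u'', t'', h''⟩

theorem PathW.append {l l' l'' : ℕ} {v : G.V l} {w₁ w₂ : List A} {m : G.V l'} {u : G.V l''}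
    (h₁ : G.PathW l v w₁ l' m) (h₂ : G.PathW l' m w₂ l'' u) :
    G.PathW l v (w₁ ++ w₂) l'' u := by
  induction w₁ generalizing l v with
  | nil =>
    obtain ⟨rfl, rfl⟩ := h₁
    exact h₂
  | cons a w ih =>
    obtain ⟨e, he, hlab, htail⟩ := h₁
    exact ⟨e, he, hlab, ih htail⟩

end LGS

theorem irred_of_iotaIrred_general
    (Λ : Set (ℤ → A)) (G : LGS A)
    (hpres : G.Presents Λ) (hiota : G.IotaIrred) :
    IrredShift Λ := by
  intro μ ν hμ hν
  obtain ⟨l, v, l', p, hpμ⟩ := (hpres μ).1 hμ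
  obtain ⟨m, u, m', q, hpν⟩ := (hpres ν).1 hν
  obtain ⟨v, p, hpμ⟩ := hpμ.exists_lift_add m
  have hν_lift := hpν.exists_lift_add l'
  rw [Nat.add_comm m l'] at hν_lift
  obtain ⟨u, q, hpν⟩ := hν_lift
  obtain ⟨n, ξ, u', q', hpξ, -, hpν', -⟩ := hiota _ p u ν _ q hpν
  exact ⟨ξ, (hpres _).2 ⟨_, v, _, q', (hpμ.append hpξ).append hpν'⟩⟩

/-- if a `λ`-graph system presenting `Λ` is `ι`-irreducible, then `Λ`
is irreducible. -/
theorem irred_of_iotaIrred [TopologicalSpace A] [DiscreteTopology A] [Finite A]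
    (Λ : Set (ℤ → A)) (hΛ : IsSubshift Λ) (G : LGS A)
    (hpres : G.Presents Λ) (hiota : G.IotaIrred) :
    IrredShift Λ :=
  irred_of_iotaIrred_general Λ G hpres hiota
end

section
/- For a λ-synchronizing subshift Λ, the canonical λ-synchronizing λ-graph system 𝔏^{λ(Λ)} is minimal: any λ-graph subsystem of 𝔏^{λ(Λ)} that presents Λ equals 𝔏^{λ(Λ)}. -/
open List

variable {A : Type*}

namespace LGS

variable {A : Type*}

/-- Isomorphism of `λ`-graph systems: level-preserving bijections of vertices and edges
compatible with sources, terminals, labels and `ι`-maps. -/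
def Isomorphic (G G' : LGS A) : Prop :=
  ∃ (Φv : ∀ l, G.V l ≃ G'.V l) (Φe : ∀ l, G.E l ≃ G'.E l),
    (∀ (l : ℕ) (e : G.E l), G'.src l (Φe l e) = Φv l (G.src l e)) ∧
    (∀ (l : ℕ) (e : G.E l), G'.tgt l (Φe l e) = Φv (l + 1) (G.tgt l e)) ∧
    (∀ (l : ℕ) (e : G.E l), G'.lab l (Φe l e) = G.lab l e) ∧
    (∀ (l : ℕ) (v : G.V (l + 1)), G'.iota l (Φv (l + 1) v) = Φv l (G.iota l v))

/-- The characterizing properties of the canonical `λ`-synchronizing `λ`-graph system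
`𝔏^{λ(Λ)}` of a `λ`-synchronizing subshift `Λ` (Theorem 3.8 of the paper): it is the
unique left-resolving, predecessor-separated, `ι`-irreducible, `λ`-synchronizing
`λ`-graph system presenting `Λ`. -/
def CanonicalProps (G : LGS A) (Λ : Set (ℤ → A)) : Prop :=
  G.Presents Λ ∧ G.LeftResolving ∧ G.PredSeparated ∧ G.IotaIrred ∧ G.LambdaSyncSys

end LGS

namespace LGS

variable {A : Type*}

/-- Labeled paths of `G` using only edges in `Pe`. -/
def PathWIn (G : LGS A) (Pe : ∀ l, Set (G.E l)) :
    ∀ (l : ℕ), G.V l → List A → ∀ (l' : ℕ), G.V l' → Prop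
  | l, v, [], l', u => ∃ h : l = l', h ▸ v = u
  | l, v, a :: w, l', u =>
      ∃ e : G.E l, e ∈ Pe l ∧ G.src l e = v ∧ G.lab l e = a ∧
        G.PathWIn Pe (l + 1) (G.tgt l e) w l' u

/-- `(Pv, Pe)` determines a `λ`-graph subsystem of `G`: the selected vertex and edge sets
are closed under sources, terminals and `ι`-maps, and the restricted data again forms a
`λ`-graph system (successors, predecessors, surjective `ι`-maps, local property). -/
structure IsSubsystem (G : LGS A) (Pv : ∀ l, Set (G.V l)) (Pe : ∀ l, Set (G.E l)) : Prop where
  src_mem : ∀ (l : ℕ) (e : G.E l), e ∈ Pe l → G.src l e ∈ Pv l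
  tgt_mem : ∀ (l : ℕ) (e : G.E l), e ∈ Pe l → G.tgt l e ∈ Pv (l + 1)
  iota_mem : ∀ (l : ℕ) (v : G.V (l + 1)), v ∈ Pv (l + 1) → G.iota l v ∈ Pv l
  iota_surj : ∀ (l : ℕ), ∀ v ∈ Pv l, ∃ u ∈ Pv (l + 1), G.iota l u = v
  succ : ∀ (l : ℕ), ∀ v ∈ Pv l, ∃ e ∈ Pe l, G.src l e = v
  pred : ∀ (l : ℕ), ∀ v ∈ Pv (l + 1), ∃ e ∈ Pe l, G.tgt l e = v
  local_property : ∀ (l : ℕ) (u : G.V l) (v : G.V (l + 2)) (α : A),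
    u ∈ Pv l → v ∈ Pv (l + 2) →
    Nat.card {e : G.E (l + 1) // e ∈ Pe (l + 1) ∧
        G.tgt (l + 1) e = v ∧ G.iota l (G.src (l + 1) e) = u ∧ G.lab (l + 1) e = α}
      = Nat.card {e : G.E l // e ∈ Pe l ∧
        G.src l e = u ∧ G.tgt l e = G.iota (l + 1) v ∧ G.lab l e = α}

/-- The subsystem `(Pv, Pe)` of `G` presents `Λ`. -/
def SubPresents (G : LGS A) (Pv : ∀ l, Set (G.V l)) (Pe : ∀ l, Set (G.E l))
    (Λ : Set (ℤ → A)) : Prop :=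
  ∀ w : List A, Adm Λ w ↔
    ∃ (l : ℕ) (v : G.V l), v ∈ Pv l ∧ ∃ (l' : ℕ) (u : G.V l'), G.PathWIn Pe l v w l' u

end LGS

/-!
Every vertex `v` of the canonical system launches some word `w`. The word is admissible, so it
leaves some vertex of the subsystem. By the local property of the subsystem (and surjectivity of
its `ι`-maps), a word leaving a subsystem vertex at level `l + 1` leaves one at level `l`, and
conversely. So `w` leaves a subsystem vertex at `v`'s level, and that vertex can only be `v`. For an edge
`e`, apply the same argument to `lab e :: w`, where `w` is launched by the terminal vertex of
`e`; left-resolvingness then identifies the subsystem edge that is found with `e`.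
-/

namespace LGS

variable {G : LGS A} {Pv : ∀ l, Set (G.V l)} {Pe : ∀ l, Set (G.E l)}

def LeavesIn (G : LGS A) (Pe : ∀ l, Set (G.E l)) (l : ℕ) (v : G.V l) (w : List A) : Prop :=
  ∃ (l' : ℕ) (u : G.V l'), G.PathWIn Pe l v w l' u

theorem PathWIn.toPathW : ∀ {w : List A} {l : ℕ} {v : G.V l} {l' : ℕ} {u : G.V l'},
    G.PathWIn Pe l v w l' u → G.PathW l v w l' u
  | [], _, _, _, _, h => h
  | _ :: _, _, _, _, _, ⟨e, _, hsrc, hlab, h⟩ => ⟨e, hsrc, hlab, h.toPathW⟩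

theorem LeavesIn.toLeaves {l : ℕ} {v : G.V l} {w : List A} (h : G.LeavesIn Pe l v w) :
    G.Leaves l v w :=
  let ⟨l', u, hp⟩ := h
  ⟨l', u, hp.toPathW⟩

namespace IsSubsystem

theorem nonempty_local_iff (hsub : G.IsSubsystem Pv Pe) {l : ℕ} {u : G.V l}
    {v : G.V (l + 2)} (α : A) (hu : u ∈ Pv l) (hv : v ∈ Pv (l + 2)) :
    Nonempty {e : G.E (l + 1) // e ∈ Pe (l + 1) ∧
        G.tgt (l + 1) e = v ∧ G.iota l (G.src (l + 1) e) = u ∧ G.lab (l + 1) e = α} ↔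
      Nonempty {e : G.E l // e ∈ Pe l ∧
        G.src l e = u ∧ G.tgt l e = G.iota (l + 1) v ∧ G.lab l e = α} := by
  have := G.finE l
  have := G.finE (l + 1)
  simp only [← Finite.card_pos_iff, hsub.local_property l u v α hu hv]

theorem exists_iota_eq_leavesIn (hsub : G.IsSubsystem Pv Pe) :
    ∀ {w : List A} {l : ℕ} {u : G.V l}, u ∈ Pv l → G.LeavesIn Pe l u w →
      ∃ u' ∈ Pv (l + 1), G.iota l u' = u ∧ G.LeavesIn Pe (l + 1) u' w
  | [], l, u, hu, _ =>
    let ⟨u', hu', hiota⟩ := hsub.iota_surj l u hu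
    ⟨u', hu', hiota, l + 1, u', rfl, rfl⟩
  | a :: _, l, u, hu, ⟨l', t, e, he, hsrc, hlab, hw⟩ => by
    obtain ⟨t', ht', hiota, l'', s, hw'⟩ :=
      hsub.exists_iota_eq_leavesIn (hsub.tgt_mem l e he) ⟨l', t, hw⟩
    obtain ⟨⟨e', he', htgt', hsrc', hlab'⟩⟩ :=
      (hsub.nonempty_local_iff a hu ht').2 ⟨⟨e, he, hsrc, hiota.symm, hlab⟩⟩
    exact ⟨G.src (l + 1) e', hsub.src_mem _ e' he', hsrc', l'', s, e', he', rfl, hlab',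
      htgt' ▸ hw'⟩

theorem leavesIn_iota (hsub : G.IsSubsystem Pv Pe) :
    ∀ {w : List A} {l : ℕ} {u : G.V (l + 1)}, G.LeavesIn Pe (l + 1) u w →
      G.LeavesIn Pe l (G.iota l u) w
  | [], l, u, _ => ⟨l, G.iota l u, rfl, rfl⟩
  | a :: _, l, u, ⟨l', t, e, he, hsrc, hlab, hw⟩ => by
    have hu : u ∈ Pv (l + 1) := hsrc ▸ hsub.src_mem _ e he
    obtain ⟨⟨f, hf, hsrc', htgt', hlab'⟩⟩ :=
      (hsub.nonempty_local_iff a (hsub.iota_mem l u hu) (hsub.tgt_mem _ e he)).1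
        ⟨⟨e, he, rfl, congrArg (G.iota l) hsrc, hlab⟩⟩
    obtain ⟨l'', s, hw'⟩ := hsub.leavesIn_iota ⟨l', t, hw⟩
    exact ⟨l'', s, f, hf, hsrc', hlab', htgt' ▸ hw'⟩

theorem exists_mem_leavesIn_succ_iff (hsub : G.IsSubsystem Pv Pe) (w : List A) (l : ℕ) :
    (∃ u ∈ Pv (l + 1), G.LeavesIn Pe (l + 1) u w) ↔ ∃ u ∈ Pv l, G.LeavesIn Pe l u w :=
  ⟨fun ⟨u, hu, hw⟩ => ⟨G.iota l u, hsub.iota_mem l u hu, hsub.leavesIn_iota hw⟩,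
    fun ⟨_, hu, hw⟩ =>
      let ⟨u', hu', _, hw'⟩ := hsub.exists_iota_eq_leavesIn hu hw
      ⟨u', hu', hw'⟩⟩

theorem exists_mem_leavesIn_iff (hsub : G.IsSubsystem Pv Pe) (w : List A) (l m : ℕ) :
    (∃ u ∈ Pv l, G.LeavesIn Pe l u w) ↔ ∃ u ∈ Pv m, G.LeavesIn Pe m u w := by
  have hzero : ∀ n, (∃ u ∈ Pv n, G.LeavesIn Pe n u w) ↔ ∃ u ∈ Pv 0, G.LeavesIn Pe 0 u w := by
    intro n
    induction n with
    | zero => rfl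
    | succ n ih => exact (hsub.exists_mem_leavesIn_succ_iff w n).trans ih
  exact (hzero l).trans (hzero m).symm

theorem exists_mem_leavesIn_of_leaves (hsub : G.IsSubsystem Pv Pe) {Λ : Set (ℤ → A)}
    (hG : G.Presents Λ) (hpres : G.SubPresents Pv Pe Λ) {m : ℕ} {v : G.V m} {w : List A}
    (hw : G.Leaves m v w) (l : ℕ) : ∃ u ∈ Pv l, G.LeavesIn Pe l u w := by
  obtain ⟨l', t, hp⟩ := hw
  obtain ⟨n, u, hu, hw'⟩ := (hpres w).1 ((hG w).2 ⟨m, v, l', t, hp⟩)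
  exact (hsub.exists_mem_leavesIn_iff w l n).2 ⟨u, hu, hw'⟩

end IsSubsystem

end LGS

theorem canonical_minimal_general
    (Λ : Set (ℤ → A)) (G : LGS A) (hG : G.CanonicalProps Λ)
    (Pv : ∀ l, Set (G.V l)) (Pe : ∀ l, Set (G.E l))
    (hsub : G.IsSubsystem Pv Pe) (hpres : G.SubPresents Pv Pe Λ) :
    (∀ l, Pv l = Set.univ) ∧ (∀ l, Pe l = Set.univ) := by
  obtain ⟨hpresG, hlr, -, -, hlaunch⟩ := hG
  refine ⟨fun l => Set.eq_univ_of_forall fun v => ?_, fun l => Set.eq_univ_of_forall fun e => ?_⟩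
  · obtain ⟨w, hw, huniq⟩ := hlaunch l v
    obtain ⟨u, hu, hwu⟩ := hsub.exists_mem_leavesIn_of_leaves hpresG hpres hw l
    exact huniq u hwu.toLeaves ▸ hu
  · obtain ⟨w, ⟨l', t, hw⟩, huniq⟩ := hlaunch (l + 1) (G.tgt l e)
    obtain ⟨-, -, l'', t', e', he', -, hlab, hw'⟩ :=
      hsub.exists_mem_leavesIn_of_leaves hpresG hpres (w := G.lab l e :: w)
        ⟨l', t, e, rfl, rfl, hw⟩ l
    have htgt : G.tgt l e' = G.tgt l e := huniq _ ⟨l'', t', hw'.toPathW⟩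
    exact hlr l e' e hlab htgt ▸ he'

/-- the canonical `λ`-synchronizing `λ`-graph system `𝔏^{λ(Λ)}` of a
`λ`-synchronizing subshift `Λ` (identified, via its intrinsic characterization, as a
left-resolving, predecessor-separated, `ι`-irreducible, `λ`-synchronizing `λ`-graph
system presenting `Λ`) is minimal: any `λ`-graph subsystem of it presenting `Λ` is the
whole system. -/
theorem canonical_minimal [TopologicalSpace A] [DiscreteTopology A] [Finite A]
    (Λ : Set (ℤ → A)) (hΛ : IsSubshift Λ) (hls : LambdaSync Λ)
    (G : LGS A) (hG : G.CanonicalProps Λ)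
    (Pv : ∀ l, Set (G.V l)) (Pe : ∀ l, Set (G.E l))
    (hsub : G.IsSubsystem Pv Pe) (hpres : G.SubPresents Pv Pe Λ) :
    (∀ l, Pv l = Set.univ) ∧ (∀ l, Pe l = Set.univ) :=
  canonical_minimal_general Λ G hG Pv Pe hsub hpres
end

section
/- An irreducible subshift Λ is λ-synchronizing if and only if its expansion Λ̃ (replacing the symbol 1 by 01) is λ-synchronizing. -/
open List

variable {A : Type*}

/-- `Γ_l^-` of a word with respect to a language `L ⊆ B^*`. -/
def GammaL {B : Type*} (L : Set (List B)) (l : ℕ) (μ : List B) : Set (List B) :=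
  {ν | ν.length = l ∧ ν ∈ L ∧ ν ++ μ ∈ L}

/-- `μ` is an `l`-synchronizing word with respect to the language `L`. -/
def LSyncL {B : Type*} (L : Set (List B)) (l : ℕ) (μ : List B) : Prop :=
  μ ∈ L ∧ ∀ ω : List B, μ ++ ω ∈ L → GammaL L l μ = GammaL L l (μ ++ ω)

/-- `ξ^B`: replace every occurrence of the symbol `a1` (playing the role of `1`) by the
word `0 1`, where the new symbol `0` is `none` and each old symbol `a` is `some a`. -/
def xiB [DecidableEq A] (a1 : A) : List A → List (Option A)
  | [] => []
  | a :: w => (if a = a1 then [none, some a1] else [some a]) ++ xiB a1 w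

/-- The language `B_*(Λ̃)` of the expansion `Λ̃` of `Λ` (replacing the symbol `1 = a1` by
`01`): the factors of the `ξ^B`-images of admissible words of `Λ`. -/
def tildeLang [DecidableEq A] (Λ : Set (ℤ → A)) (a1 : A) : Set (List (Option A)) :=
  {u | ∃ w : List A, Adm Λ w ∧ u <:+: xiB a1 w}

/-- The `λ`-synchronizing property, formulated for a language `L`. -/
def LambdaSyncL {B : Type*} (L : Set (List B)) : Prop :=
  ∀ (η : List B) (k : ℕ), η ∈ L → η.length ≤ k →
    ∃ ν : List B, LSyncL L k ν ∧ LSyncL L (k - η.length) (η ++ ν)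

section AuxLemmas

variable {A : Type*}

/-! ### Basic facts about `Adm` -/

lemma adm_iff' (Λ : Set (ℤ → A)) (w : List A) :
    Adm Λ w ↔ ∃ x ∈ Λ, ∃ n : ℤ, ∀ i : ℕ, (h : i < w.length) → x (n + i) = w[i] := by
  constructor
  · rintro ⟨x, hx, n, h⟩
    exact ⟨x, hx, n, fun i hi => h ⟨i, hi⟩⟩
  · rintro ⟨x, hx, n, h⟩
    exact ⟨x, hx, n, fun i => h i i.isLt⟩

lemma adm_nil {Λ : Set (ℤ → A)} {w : List A} (h : Adm Λ w) : Adm Λ ([] : List A) := by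
  obtain ⟨x, hx, n, -⟩ := h
  exact ⟨x, hx, n, fun i => i.elim0⟩

lemma adm_take {Λ : Set (ℤ → A)} {w : List A} (m : ℕ) (h : Adm Λ w) : Adm Λ (w.take m) := by
  rw [adm_iff'] at h ⊢
  obtain ⟨x, hx, n, H⟩ := h
  refine ⟨x, hx, n, fun i hi => ?_⟩
  have hi' : i < w.length := by simp [List.length_take] at hi; omega
  rw [List.getElem_take]
  exact H i hi'

lemma adm_drop {Λ : Set (ℤ → A)} {w : List A} (m : ℕ) (h : Adm Λ w) : Adm Λ (w.drop m) := by
  rw [adm_iff'] at h ⊢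
  obtain ⟨x, hx, n, H⟩ := h
  refine ⟨x, hx, n + m, fun i hi => ?_⟩
  have hi' : m + i < w.length := by simp [List.length_drop] at hi; omega
  rw [List.getElem_drop]
  rw [show n + (m : ℤ) + (i : ℕ) = n + ((m + i : ℕ) : ℤ) by push_cast; ring]
  exact H (m + i) hi'

lemma adm_infix {Λ : Set (ℤ → A)} {u w : List A} (h : u <:+: w) (hw : Adm Λ w) :
    Adm Λ u := by
  obtain ⟨α, β, rfl⟩ := h
  have h1 : Adm Λ (u ++ β) := by
    have h0 := adm_drop α.length hw
    rwa [List.append_assoc, List.drop_left] at h0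
  have h2 := adm_take u.length h1
  rwa [List.take_left] at h2

lemma adm_cons_left {Λ : Set (ℤ → A)} {w : List A} (h : Adm Λ w) :
    ∃ a, Adm Λ (a :: w) := by
  rw [adm_iff'] at h
  obtain ⟨x, hx, n, H⟩ := h
  refine ⟨x (n - 1), (adm_iff' _ _).2 ⟨x, hx, n - 1, ?_⟩⟩
  intro i hi
  cases i with
  | zero => simp
  | succ j =>
    have hj : j < w.length := by simpa using hi
    have := H j hj
    rw [show n - 1 + ((j + 1 : ℕ) : ℤ) = n + (j : ℕ) by push_cast; ring]
    simpa using this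

lemma adm_ext_left {Λ : Set (ℤ → A)} {w : List A} (h : Adm Λ w) (m : ℕ) :
    ∃ p : List A, p.length = m ∧ Adm Λ (p ++ w) := by
  induction m with
  | zero => exact ⟨[], rfl, h⟩
  | succ m ih =>
    obtain ⟨p, hp, hpw⟩ := ih
    obtain ⟨a, ha⟩ := adm_cons_left hpw
    exact ⟨a :: p, by simp [hp], by simpa using ha⟩

lemma adm_snoc_right {Λ : Set (ℤ → A)} {w : List A} (h : Adm Λ w) :
    ∃ a, Adm Λ (w ++ [a]) := by
  rw [adm_iff'] at h
  obtain ⟨x, hx, n, H⟩ := h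
  refine ⟨x (n + w.length), (adm_iff' _ _).2 ⟨x, hx, n, ?_⟩⟩
  intro i hi
  have hi2 : i < w.length + 1 := by simpa using hi
  rcases lt_or_ge i w.length with h' | h'
  · rw [List.getElem_append_left h']
    exact H i h'
  · have : i = w.length := by omega
    subst this
    rw [List.getElem_append_right (le_refl _)]
    simp

/-! ### Basic facts about `xiB` -/

variable [DecidableEq A]

lemma xiB_nil (a1 : A) : xiB a1 ([] : List A) = [] := rfl

lemma xiB_cons (a1 a : A) (w : List A) :
    xiB a1 (a :: w) = (if a = a1 then [none, some a1] else [some a]) ++ xiB a1 w := rfl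

lemma xiB_append (a1 : A) (u v : List A) : xiB a1 (u ++ v) = xiB a1 u ++ xiB a1 v := by
  induction u with
  | nil => simp [xiB_nil]
  | cons a u ih => simp [xiB_cons, ih]

lemma xiB_a1 (a1 : A) : xiB a1 [a1] = [none, some a1] := by
  simp [xiB_cons, xiB_nil]

lemma length_le_xiB (a1 : A) (w : List A) : w.length ≤ (xiB a1 w).length := by
  induction w with
  | nil => simp [xiB_nil]
  | cons a w ih => by_cases h : a = a1 <;> simp [xiB_cons, h] <;> omega

lemma xiB_length_le (a1 : A) (w : List A) : (xiB a1 w).length ≤ 2 * w.length := by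
  induction w with
  | nil => simp [xiB_nil]
  | cons a w ih => by_cases h : a = a1 <;> simp [xiB_cons, h] <;> omega

lemma xiB_eq_nil_iff (a1 : A) (w : List A) : xiB a1 w = [] ↔ w = [] := by
  constructor
  · intro h
    have := length_le_xiB a1 w
    rw [h] at this
    simpa using List.length_eq_zero_iff.1 (Nat.le_zero.1 (by simpa using this))
  · rintro rfl; rfl

lemma xiB_last (a1 : A) {w : List A} (h : w ≠ []) :
    ∃ u b, xiB a1 w = u ++ [some b] := by
  induction w with
  | nil => exact absurd rfl h
  | cons a w ih =>
    rcases eq_or_ne w [] with rfl | hw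
    · by_cases ha : a = a1
      · exact ⟨[none], a1, by simp [xiB_cons, xiB_nil, ha]⟩
      · exact ⟨[], a, by simp [xiB_cons, xiB_nil, ha]⟩
    · obtain ⟨u, b, hub⟩ := ih hw
      exact ⟨(if a = a1 then [none, some a1] else [some a]) ++ u, b, by
        simp [xiB_cons, hub]⟩
lemma suffix_append_cases {α : Type*} {v l₁ l₂ : List α} (h : v <:+ l₁ ++ l₂) :
    v <:+ l₂ ∨ ∃ v₁, v₁ <:+ l₁ ∧ v = v₁ ++ l₂ := by
  obtain ⟨t, ht⟩ := h
  rw [List.append_eq_append_iff] at ht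
  rcases ht with ⟨a', ha1, ha2⟩ | ⟨c', hc1, hc2⟩
  · exact Or.inr ⟨a', ⟨t, ha1.symm⟩, ha2⟩
  · exact Or.inl ⟨c', hc2.symm⟩

/-! ### Structural lemmas about suffixes/prefixes/occurrences in `xiB`-images -/

lemma suffix_xiB (a1 : A) :
    ∀ (w : List A) (v : List (Option A)), v <:+ xiB a1 w →
    ∃ (s : Bool) (w' : List A),
      v = (if s then some a1 :: xiB a1 w' else xiB a1 w') ∧
      (if s then a1 :: w' else w') <:+ w := by
  intro w
  induction w with
  | nil =>
    intro v hv
    rw [xiB_nil, List.suffix_nil] at hv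
    subst hv
    exact ⟨false, [], by simp [xiB_nil], by simp⟩
  | cons a w₀ ih =>
    intro v hv
    rw [xiB_cons] at hv
    rcases suffix_append_cases hv with hv | ⟨v₁, hv₁, rfl⟩
    · obtain ⟨s, w', h1, h2⟩ := ih v hv
      exact ⟨s, w', h1, h2.trans (List.suffix_cons _ _)⟩
    · by_cases ha : a = a1
      · subst ha
        rw [if_pos rfl] at hv₁
      -- v₁ <:+ [none, some a1]
        rw [List.suffix_cons_iff] at hv₁
        rcases hv₁ with rfl | hv₁
        · exact ⟨false, a :: w₀, by simp [xiB_cons], List.suffix_rfl⟩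
        · rw [List.suffix_cons_iff] at hv₁
          rcases hv₁ with rfl | hv₁
          · exact ⟨true, w₀, by simp, List.suffix_rfl⟩
          · rw [List.suffix_nil] at hv₁
            subst hv₁
            exact ⟨false, w₀, by simp, (List.suffix_cons _ _)⟩
      · rw [if_neg ha] at hv₁
        rw [List.suffix_cons_iff] at hv₁
        rcases hv₁ with rfl | hv₁
        · exact ⟨false, a :: w₀, by simp [xiB_cons, ha], List.suffix_rfl⟩
        · rw [List.suffix_nil] at hv₁
          subst hv₁
          exact ⟨false, w₀, by simp, (List.suffix_cons _ _)⟩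

lemma prefix_xiB (a1 : A) :
    ∀ (w : List A) (u : List (Option A)), u <+: xiB a1 w →
    ∃ (t : Bool) (c : List A),
      u = xiB a1 c ++ (if t then [none] else []) ∧
      (if t then c ++ [a1] else c) <+: w := by
  intro w
  induction w with
  | nil =>
    intro u hu
    rw [xiB_nil, List.prefix_nil] at hu
    subst hu
    exact ⟨false, [], by simp [xiB_nil], by simp⟩
  | cons a w₀ ih =>
    intro u hu
    rw [xiB_cons] at hu
    by_cases ha : a = a1
    · rw [if_pos ha] at hu
      rcases u with _ | ⟨b, u'⟩
      · exact ⟨false, [], by simp [xiB_nil], by simp⟩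
      · rw [show ([none, some a1] : List (Option A)) ++ xiB a1 w₀
            = none :: (some a1 :: xiB a1 w₀) from rfl, List.cons_prefix_cons] at hu
        obtain ⟨rfl, hu⟩ := hu
        rcases u' with _ | ⟨b', u''⟩
        · exact ⟨true, [], by simp [xiB_nil], by
            simp only [if_pos rfl]
            subst ha
            simp [List.cons_prefix_cons]⟩
        · rw [List.cons_prefix_cons] at hu
          obtain ⟨rfl, hu⟩ := hu
          obtain ⟨t, c, h1, h2⟩ := ih u'' hu
          refine ⟨t, a1 :: c, by simp [xiB_cons, h1], ?_⟩
          subst ha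
          cases t <;> simp only [if_true, if_false, Bool.false_eq_true] <;>
            simp_all [List.cons_prefix_cons]
    · rw [if_neg ha] at hu
      rcases u with _ | ⟨b, u'⟩
      · exact ⟨false, [], by simp [xiB_nil], by simp⟩
      · rw [show ([some a] : List (Option A)) ++ xiB a1 w₀
            = some a :: xiB a1 w₀ from rfl, List.cons_prefix_cons] at hu
        obtain ⟨rfl, hu⟩ := hu
        obtain ⟨t, c, h1, h2⟩ := ih u' hu
        refine ⟨t, a :: c, by simp [xiB_cons, ha, h1], ?_⟩
        cases t <;> simp only [if_true, if_false, Bool.false_eq_true] <;>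
          simp_all [List.cons_prefix_cons]
lemma none_occ (a1 : A) :
    ∀ (w : List A) (α β : List (Option A)), xiB a1 w = α ++ none :: β →
    ∃ p w₂, w = p ++ a1 :: w₂ ∧ α = xiB a1 p ∧ β = some a1 :: xiB a1 w₂ := by
  intro w
  induction w with
  | nil =>
    intro α β h
    rw [xiB_nil] at h
    exact absurd h (by simp)
  | cons a w₀ ih =>
    intro α β h
    rw [xiB_cons] at h
    by_cases ha : a = a1
    · rw [if_pos ha] at h
      simp only [List.cons_append, List.nil_append] at h
      rcases α with _ | ⟨c, α'⟩
      · simp only [List.nil_append, List.cons.injEq] at h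
        exact ⟨[], w₀, by simp [ha], by simp [xiB_nil], h.2.symm⟩
      · simp only [List.cons_append, List.cons.injEq] at h
        obtain ⟨rfl, h⟩ := h
        rcases α' with _ | ⟨c', α''⟩
        · simp only [List.nil_append, List.cons.injEq] at h
          exact absurd h.1 (by simp)
        · simp only [List.cons_append, List.cons.injEq] at h
          obtain ⟨rfl, h⟩ := h
          obtain ⟨p, w₂, rfl, rfl, rfl⟩ := ih α'' β h
          exact ⟨a1 :: p, w₂, by simp [ha], by simp [xiB_cons], rfl⟩
    · rw [if_neg ha] at h
      simp only [List.cons_append, List.nil_append] at h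
      rcases α with _ | ⟨c, α'⟩
      · simp only [List.nil_append, List.cons.injEq] at h
        exact absurd h.1 (by simp)
      · simp only [List.cons_append, List.cons.injEq] at h
        obtain ⟨rfl, h⟩ := h
        obtain ⟨p, w₂, rfl, rfl, rfl⟩ := ih α' β h
        exact ⟨a :: p, w₂, rfl, by simp [xiB_cons, ha], rfl⟩

lemma some_a1_occ (a1 : A) :
    ∀ (w : List A) (α β : List (Option A)), xiB a1 w = α ++ some a1 :: β →
    ∃ p w₂, w = p ++ a1 :: w₂ ∧ α = xiB a1 p ++ [none] ∧ β = xiB a1 w₂ := by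
  intro w
  induction w with
  | nil =>
    intro α β h
    rw [xiB_nil] at h
    exact absurd h (by simp)
  | cons a w₀ ih =>
    intro α β h
    rw [xiB_cons] at h
    by_cases ha : a = a1
    · rw [if_pos ha] at h
      simp only [List.cons_append, List.nil_append] at h
      rcases α with _ | ⟨c, α'⟩
      · simp only [List.nil_append, List.cons.injEq] at h
        exact absurd h.1 (by simp)
      · simp only [List.cons_append, List.cons.injEq] at h
        obtain ⟨rfl, h⟩ := h
        rcases α' with _ | ⟨c', α''⟩
        · simp only [List.nil_append, List.cons.injEq] at h
          exact ⟨[], w₀, by simp [ha], by simp [xiB_nil], h.2.symm⟩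
        · simp only [List.cons_append, List.cons.injEq] at h
          obtain ⟨rfl, h⟩ := h
          obtain ⟨p, w₂, rfl, rfl, rfl⟩ := ih α'' β h
          exact ⟨a1 :: p, w₂, by simp [ha], by simp [xiB_cons], rfl⟩
    · rw [if_neg ha] at h
      simp only [List.cons_append, List.nil_append] at h
      rcases α with _ | ⟨c, α'⟩
      · simp only [List.nil_append, List.cons.injEq] at h
        exact absurd (Option.some.inj h.1) ha
      · simp only [List.cons_append, List.cons.injEq] at h
        obtain ⟨rfl, h⟩ := h
        obtain ⟨p, w₂, rfl, rfl, rfl⟩ := ih α' β h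
        exact ⟨a :: p, w₂, rfl, by simp [xiB_cons, ha], rfl⟩

lemma some_b_occ (a1 : A) {b : A} (hb : b ≠ a1) :
    ∀ (w : List A) (α β : List (Option A)), xiB a1 w = α ++ some b :: β →
    ∃ p w₂, w = p ++ b :: w₂ ∧ α = xiB a1 p ∧ β = xiB a1 w₂ := by
  intro w
  induction w with
  | nil =>
    intro α β h
    rw [xiB_nil] at h
    exact absurd h (by simp)
  | cons a w₀ ih =>
    intro α β h
    rw [xiB_cons] at h
    by_cases ha : a = a1
    · rw [if_pos ha] at h
      simp only [List.cons_append, List.nil_append] at h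
      rcases α with _ | ⟨c, α'⟩
      · simp only [List.nil_append, List.cons.injEq] at h
        exact absurd h.1 (by simp)
      · simp only [List.cons_append, List.cons.injEq] at h
        obtain ⟨rfl, h⟩ := h
        rcases α' with _ | ⟨c', α''⟩
        · simp only [List.nil_append, List.cons.injEq] at h
          exact absurd (Option.some.inj h.1).symm hb
        · simp only [List.cons_append, List.cons.injEq] at h
          obtain ⟨rfl, h⟩ := h
          obtain ⟨p, w₂, rfl, rfl, rfl⟩ := ih α'' β h
          exact ⟨a1 :: p, w₂, by simp [ha], by simp [xiB_cons], rfl⟩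
    · rw [if_neg ha] at h
      simp only [List.cons_append, List.nil_append] at h
      rcases α with _ | ⟨c, α'⟩
      · simp only [List.nil_append, List.cons.injEq] at h
        obtain ⟨h1, h2⟩ := h
        obtain rfl := Option.some.inj h1
        exact ⟨[], w₀, rfl, by simp [xiB_nil], h2.symm⟩
      · simp only [List.cons_append, List.cons.injEq] at h
        obtain ⟨rfl, h⟩ := h
        obtain ⟨p, w₂, rfl, rfl, rfl⟩ := ih α' β h
        exact ⟨a :: p, w₂, rfl, by simp [xiB_cons, ha], rfl⟩

lemma xiB_prefix_align (a1 : A) :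
    ∀ (μ w : List A) (γ : List (Option A)), xiB a1 μ ++ γ = xiB a1 w →
    ∃ q, w = μ ++ q ∧ γ = xiB a1 q := by
  intro μ
  induction μ with
  | nil =>
    intro w γ h
    exact ⟨w, rfl, by simpa [xiB_nil] using h⟩
  | cons a μ₀ ih =>
    intro w γ h
    rcases w with _ | ⟨b, w₀⟩
    · rw [xiB_nil] at h
      exfalso
      by_cases ha : a = a1 <;> simp [xiB_cons, ha] at h
    · rw [xiB_cons, xiB_cons] at h
      by_cases ha : a = a1 <;> by_cases hb : b = a1
      · rw [if_pos ha, if_pos hb] at h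
        simp only [List.cons_append, List.nil_append, List.append_assoc,
          List.cons.injEq] at h
        obtain ⟨-, -, h⟩ := h
        obtain ⟨q, rfl, rfl⟩ := ih w₀ γ h
        exact ⟨q, by simp [ha, hb], rfl⟩
      · rw [if_pos ha, if_neg hb] at h
        simp at h
      · rw [if_neg ha, if_pos hb] at h
        simp at h
      · rw [if_neg ha, if_neg hb] at h
        simp only [List.cons_append, List.nil_append, List.cons.injEq,
          Option.some.injEq] at h
        obtain ⟨rfl, h⟩ := h
        obtain ⟨q, rfl, rfl⟩ := ih w₀ γ h
        exact ⟨q, rfl, rfl⟩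

lemma xiB_infix_align (a1 : A) {μ w : List A} {α β : List (Option A)} (hμ : μ ≠ [])
    (h : xiB a1 w = α ++ xiB a1 μ ++ β) :
    ∃ p q, w = p ++ μ ++ q ∧ α = xiB a1 p ∧ β = xiB a1 q := by
  rcases μ with _ | ⟨a, μ₀⟩
  · exact absurd rfl hμ
  by_cases ha : a = a1
  · have h' : xiB a1 w = α ++ none :: (some a1 :: (xiB a1 μ₀ ++ β)) := by
      rw [h, xiB_cons, if_pos ha]
      simp
    obtain ⟨p, w₂, rfl, rfl, h2⟩ := none_occ a1 _ _ _ h'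
    simp only [List.cons.injEq] at h2
    obtain ⟨q, rfl, rfl⟩ := xiB_prefix_align a1 μ₀ w₂ _ h2.2
    exact ⟨p, q, by simp [ha], rfl, rfl⟩
  · have h' : xiB a1 w = α ++ some a :: (xiB a1 μ₀ ++ β) := by
      rw [h, xiB_cons, if_neg ha]
      simp
    obtain ⟨p, w₂, rfl, rfl, h2⟩ := some_b_occ a1 ha _ _ _ h'
    obtain ⟨q, rfl, rfl⟩ := xiB_prefix_align a1 μ₀ w₂ _ h2
    exact ⟨p, q, by simp, rfl, rfl⟩
/-! ### `tildeLang` basics -/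

variable {Λ : Set (ℤ → A)}

lemma xiB_mem_tilde {a1 : A} {w : List A} (hw : Adm Λ w) : xiB a1 w ∈ tildeLang Λ a1 :=
  ⟨w, hw, List.infix_rfl⟩

lemma tilde_infix {a1 : A} {u v : List (Option A)} (h : u <:+: v)
    (hv : v ∈ tildeLang Λ a1) : u ∈ tildeLang Λ a1 := by
  obtain ⟨w, hw, hinf⟩ := hv
  exact ⟨w, hw, h.trans hinf⟩

lemma tilde_cons_left {a1 : A} {u : List (Option A)} (hu : u ∈ tildeLang Λ a1) :
    ∃ b, b :: u ∈ tildeLang Λ a1 := by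
  obtain ⟨w, hw, α, β, hab⟩ := hu
  rcases List.eq_nil_or_concat α with rfl | ⟨α', b, rfl⟩
  · obtain ⟨a, ha⟩ := adm_cons_left hw
    simp only [List.nil_append] at hab
    by_cases ha1 : a = a1
    · refine ⟨some a1, ⟨a :: w, ha, [none], β, ?_⟩⟩
      rw [xiB_cons, if_pos ha1]
      simp [hab]
    · refine ⟨some a, ⟨a :: w, ha, [], β, ?_⟩⟩
      rw [xiB_cons, if_neg ha1]
      simp [hab]
  · exact ⟨b, ⟨w, hw, α', β, by simpa [List.append_assoc] using hab⟩⟩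

lemma tilde_ext_left {a1 : A} {u : List (Option A)} (hu : u ∈ tildeLang Λ a1) (m : ℕ) :
    ∃ p : List (Option A), p.length = m ∧ p ++ u ∈ tildeLang Λ a1 := by
  induction m with
  | zero => exact ⟨[], rfl, hu⟩
  | succ m ih =>
    obtain ⟨p, hp, hpu⟩ := ih
    obtain ⟨b, hb⟩ := tilde_cons_left hpu
    exact ⟨b :: p, by simp [hp], by simpa using hb⟩

/-- Decomposition of a word of the expanded language. -/
lemma tilde_decomp (a1 : A) {u : List (Option A)} (hu : u ∈ tildeLang Λ a1) :
    ∃ (s t : Bool) (c : List A),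
      u = (if s then [some a1] else []) ++ xiB a1 c ++ (if t then [none] else []) ∧
      Adm Λ ((if s then [a1] else []) ++ c ++ (if t then [a1] else [])) := by
  obtain ⟨w, hw, hinf⟩ := hu
  rw [List.infix_iff_prefix_suffix] at hinf
  obtain ⟨v, huv, hvs⟩ := hinf
  obtain ⟨s, w', hv, hw'⟩ := suffix_xiB a1 w v hvs
  cases s with
  | false =>
    simp only [Bool.false_eq_true, if_false] at hv hw'
    subst hv
    obtain ⟨t, c, h1, h2⟩ := prefix_xiB a1 w' u huv
    refine ⟨false, t, c, by simpa using h1, ?_⟩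
    have hinf2 : (if t then c ++ [a1] else c) <:+: w := h2.isInfix.trans hw'.isInfix
    have := adm_infix hinf2 hw
    cases t <;> simpa using this
  | true =>
    simp only [if_true] at hv hw'
    subst hv
    rw [List.prefix_cons_iff] at huv
    rcases huv with rfl | ⟨u', rfl, hu'⟩
    · exact ⟨false, false, [], by simp [xiB_nil], by simpa using adm_nil hw⟩
    · obtain ⟨t, c, h1, h2⟩ := prefix_xiB a1 w' u' hu'
      refine ⟨true, t, c, by simp [h1], ?_⟩
      have hpre : a1 :: (if t then c ++ [a1] else c) <+: a1 :: w' := by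
        rw [List.cons_prefix_cons]
        exact ⟨rfl, h2⟩
      have hinf2 : a1 :: (if t then c ++ [a1] else c) <:+: w :=
        hpre.isInfix.trans hw'.isInfix
      have := adm_infix hinf2 hw
      cases t <;> simpa [List.append_assoc] using this

/-- Cover a suffix of `xiB p` by the image of a short suffix of `p`. -/
lemma suffix_xiB_cover (a1 : A) {p : List A} {v : List (Option A)} (h : v <:+ xiB a1 p) :
    ∃ ρ₀, ρ₀ <:+ p ∧ v <:+ xiB a1 ρ₀ ∧ ρ₀.length ≤ v.length := by
  obtain ⟨s, w', hv, hw'⟩ := suffix_xiB a1 p v h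
  cases s with
  | false =>
    simp only [Bool.false_eq_true, if_false] at hv hw'
    subst hv
    exact ⟨w', hw', List.suffix_rfl, length_le_xiB a1 w'⟩
  | true =>
    simp only [if_true] at hv hw'
    subst hv
    refine ⟨a1 :: w', hw', ?_, ?_⟩
    · rw [xiB_cons, if_pos rfl]
      exact ⟨[none], rfl⟩
    · simpa using Nat.succ_le_succ (length_le_xiB a1 w')

/-- Cover a prefix of `xiB q` by the image of a prefix of `q`. -/
lemma prefix_xiB_cover (a1 : A) {q : List A} {u : List (Option A)} (h : u <+: xiB a1 q) :
    ∃ ω₀, ω₀ <+: q ∧ u <+: xiB a1 ω₀ := by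
  obtain ⟨t, c, h1, h2⟩ := prefix_xiB a1 q u h
  cases t with
  | false =>
    simp only [Bool.false_eq_true, if_false] at h1 h2
    exact ⟨c, h2, by simp [h1]⟩
  | true =>
    simp only [if_true] at h1 h2
    refine ⟨c ++ [a1], h2, ?_⟩
    rw [xiB_append, xiB_a1, h1]
    exact ⟨[some a1], by simp⟩

lemma adm_of_xiB_mem (a1 : A) {m : List A} (hnil : Adm Λ ([] : List A))
    (h : xiB a1 m ∈ tildeLang Λ a1) : Adm Λ m := by
  rcases eq_or_ne m [] with rfl | hm
  · exact hnil
  · obtain ⟨w, hw, α, β, hab⟩ := h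
    obtain ⟨p, q, rfl, -, -⟩ := xiB_infix_align a1 hm hab.symm
    exact adm_infix ⟨p, q, rfl⟩ hw

lemma adm_of_xiB_none_mem (a1 : A) {m : List A}
    (h : xiB a1 m ++ [none] ∈ tildeLang Λ a1) : Adm Λ (m ++ [a1]) := by
  obtain ⟨w, hw, α, β, hab⟩ := h
  have hab' : xiB a1 w = (α ++ xiB a1 m) ++ none :: β := by
    rw [← hab]
    simp
  obtain ⟨p, w₂, rfl, hp, -⟩ := none_occ a1 _ _ _ hab'
  rcases eq_or_ne m [] with rfl | hm
  · refine adm_infix ⟨p, w₂, ?_⟩ hw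
    simp
  · obtain ⟨p₁, q, hpq, -, hq⟩ := xiB_infix_align a1 (w := p) (α := α) (β := []) hm
      (by simpa using hp.symm)
    have hq' : q = [] := (xiB_eq_nil_iff a1 q).1 hq.symm
    subst hq'
    refine adm_infix ⟨p₁, w₂, ?_⟩ hw
    rw [hpq]
    simp
/-! ### Generic lemmas about `LSyncL` -/

lemma lsyncL_strong {B : Type*} {L : Set (List B)}
    (Fact : ∀ u v : List B, u <:+: v → v ∈ L → u ∈ L)
    (Ext : ∀ u ∈ L, ∀ m : ℕ, ∃ p : List B, p.length = m ∧ p ++ u ∈ L)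
    {k : ℕ} {μ : List B} (h : LSyncL L k μ) :
    ∀ ρ ω : List B, ρ.length ≤ k → ρ ++ μ ∈ L → μ ++ ω ∈ L → ρ ++ μ ++ ω ∈ L := by
  intro ρ ω hlen h1 h2
  obtain ⟨p, hp, hpm⟩ := Ext _ h1 (k - ρ.length)
  have hpm' : (p ++ ρ) ++ μ ∈ L := by rwa [List.append_assoc]
  have hmem : (p ++ ρ) ∈ GammaL L k μ := by
    refine ⟨by simp [hp]; omega, Fact _ _ ⟨[], μ, by simp⟩ hpm', hpm'⟩
  rw [h.2 ω h2] at hmem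
  have := hmem.2.2
  exact Fact _ _ ⟨p, [], by simp⟩ this

lemma lsyncL_of_strong {B : Type*} {L : Set (List B)}
    (Fact : ∀ u v : List B, u <:+: v → v ∈ L → u ∈ L)
    {k : ℕ} {μ : List B} (hμ : μ ∈ L)
    (H : ∀ ρ ω : List B, ρ.length ≤ k → ρ ++ μ ∈ L → μ ++ ω ∈ L → ρ ++ μ ++ ω ∈ L) :
    LSyncL L k μ := by
  refine ⟨hμ, fun ω hω => ?_⟩
  ext ν
  constructor
  · rintro ⟨h1, h2, h3⟩
    refine ⟨h1, h2, ?_⟩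
    have := H ν ω (le_of_eq h1) h3 hω
    rwa [List.append_assoc] at this
  · rintro ⟨h1, h2, h3⟩
    have hinf : ν ++ μ <:+: ν ++ (μ ++ ω) := ⟨[], ω, by simp⟩
    exact ⟨h1, h2, Fact _ _ hinf h3⟩

lemma lsyncL_append {B : Type*} {L : Set (List B)} {k : ℕ} {μ δ : List B}
    (h : LSyncL L k μ) (hδ : μ ++ δ ∈ L) : LSyncL L k (μ ++ δ) := by
  refine ⟨hδ, fun ω hω => ?_⟩
  rw [List.append_assoc] at hω ⊢
  rw [← h.2 δ hδ, ← h.2 (δ ++ ω) hω]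
/-! ### Core transfer lemmas -/

/-- If `μ = (if s then a1::μ₀ else μ₀)` is (strongly) `k`-synchronizing for `Λ`, then the
corresponding word of the expansion is `k`-synchronizing for the expanded language. -/
lemma lsyncL_tilde_of_sync (a1 : A) {k : ℕ} (s : Bool) (μ₀ : List A)
    (hne : (if s then a1 :: μ₀ else μ₀) ≠ [])
    (hmem : ((if s then [some a1] else []) ++ xiB a1 μ₀) ∈ tildeLang Λ a1)
    (SS : ∀ ρ ω : List A, ρ.length + (if s then 1 else 0) ≤ k →
      Adm Λ (ρ ++ (if s then a1 :: μ₀ else μ₀)) →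
      Adm Λ ((if s then a1 :: μ₀ else μ₀) ++ ω) →
      Adm Λ (ρ ++ (if s then a1 :: μ₀ else μ₀) ++ ω)) :
    LSyncL (tildeLang Λ a1) k ((if s then [some a1] else []) ++ xiB a1 μ₀) := by
  refine lsyncL_of_strong (fun u v huv hv => tilde_infix huv hv) hmem ?_
  intro ρt ωt hlen h1 h2
  cases s with
  | false =>
    simp only [Bool.false_eq_true, if_false, List.nil_append] at hne SS h1 h2 ⊢
    simp only [Nat.add_zero] at SS
    obtain ⟨w, hw, α, β, hab⟩ := h1
    have hab' : xiB a1 w = (α ++ ρt) ++ xiB a1 μ₀ ++ β := by rw [← hab]; simp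
    obtain ⟨p, q, rfl, hp, -⟩ := xiB_infix_align a1 hne hab'
    have hρsuf : ρt <:+ xiB a1 p := ⟨α, hp⟩
    obtain ⟨ρ₀, hρ₀p, hρ₀suf, hρ₀len⟩ := suffix_xiB_cover a1 hρsuf
    obtain ⟨w', hw', α', β', hab2⟩ := h2
    have hab2' : xiB a1 w' = α' ++ xiB a1 μ₀ ++ (ωt ++ β') := by rw [← hab2]; simp
    obtain ⟨p', q', rfl, -, hq'⟩ := xiB_infix_align a1 hne hab2'
    have hωpre : ωt <+: xiB a1 q' := ⟨β', hq'⟩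
    obtain ⟨ω₀, hω₀q, hω₀pre⟩ := prefix_xiB_cover a1 hωpre
    obtain ⟨p₁, hp₁⟩ := hρ₀p
    obtain ⟨r, hr⟩ := hω₀q
    have had1 : Adm Λ (ρ₀ ++ μ₀) :=
      adm_infix ⟨p₁, q, by rw [← hp₁]; simp⟩ hw
    have had2 : Adm Λ (μ₀ ++ ω₀) :=
      adm_infix ⟨p', r, by rw [← hr]; simp⟩ hw'
    have hadm := SS ρ₀ ω₀ (hρ₀len.trans hlen) had1 had2
    obtain ⟨γ, hγ⟩ := hρ₀suf
    obtain ⟨δ, hδ⟩ := hω₀pre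
    refine ⟨ρ₀ ++ μ₀ ++ ω₀, hadm, γ, δ, ?_⟩
    rw [xiB_append, xiB_append, ← hγ, ← hδ]
    simp
  | true =>
    simp only [if_true] at hne SS h1 h2 ⊢
    rcases List.eq_nil_or_concat ρt with rfl | ⟨σ, cl, rfl⟩
    · simpa using h2
    · obtain ⟨w, hw, α, β, hab⟩ := h1
      have hab' : xiB a1 w = ((α ++ σ) ++ [cl]) ++ some a1 :: (xiB a1 μ₀ ++ β) := by
        rw [← hab]; simp
      obtain ⟨p, w₂, rfl, hα, hβ⟩ := some_a1_occ a1 _ _ _ hab'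
      obtain ⟨hα1, hα2⟩ := List.append_inj' hα rfl
      have hcl : cl = none := by simpa using hα2
      have hσsuf : σ <:+ xiB a1 p := ⟨α, hα1⟩
      obtain ⟨ρ₀, hρ₀p, hρ₀suf, hρ₀len⟩ := suffix_xiB_cover a1 hσsuf
      obtain ⟨q, rfl, rfl⟩ := xiB_prefix_align a1 μ₀ w₂ β hβ
      obtain ⟨w', hw', α', β', hab2⟩ := h2
      have hab2' : xiB a1 w' = α' ++ some a1 :: (xiB a1 μ₀ ++ (ωt ++ β')) := by
        rw [← hab2]; simp
      obtain ⟨p', w₂', rfl, -, hβ2⟩ := some_a1_occ a1 _ _ _ hab2'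
      obtain ⟨q', rfl, hq'⟩ := xiB_prefix_align a1 μ₀ w₂' _ hβ2
      have hωpre : ωt <+: xiB a1 q' := ⟨β', hq'⟩
      obtain ⟨ω₀, hω₀q, hω₀pre⟩ := prefix_xiB_cover a1 hωpre
      obtain ⟨p₁, hp₁⟩ := hρ₀p
      obtain ⟨r, hr⟩ := hω₀q
      have had1 : Adm Λ (ρ₀ ++ (a1 :: μ₀)) :=
        adm_infix ⟨p₁, q, by rw [← hp₁]; simp⟩ hw
      have had2 : Adm Λ ((a1 :: μ₀) ++ ω₀) :=
        adm_infix ⟨p', r, by rw [← hr]; simp⟩ hw'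
      have hlen' : ρ₀.length + 1 ≤ k := by
        simp at hlen
        omega
      have hadm := SS ρ₀ ω₀ hlen' had1 had2
      obtain ⟨γ, hγ⟩ := hρ₀suf
      obtain ⟨δ, hδ⟩ := hω₀pre
      refine ⟨ρ₀ ++ (a1 :: μ₀) ++ ω₀, hadm, γ, δ, ?_⟩
      rw [xiB_append, xiB_append, xiB_cons, if_pos rfl, ← hγ, ← hδ, hcl]
      simp

/-- Transfer of the synchronization property back from the expansion. -/
lemma sync_of_lsyncL_tilde (a1 : A) {k kt : ℕ} (s t : Bool) (μ₀ : List A)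
    (hnil : Adm Λ ([] : List A))
    (hmem : Adm Λ ((if s then [a1] else []) ++ μ₀ ++ (if t then [a1] else [])))
    (Hk : ∀ m : ℕ, m ≤ k → 2 * m + (if s then 1 else 0) ≤ kt)
    (h : LSyncL (tildeLang Λ a1) kt
      ((if s then [some a1] else []) ++ xiB a1 μ₀ ++ (if t then [none] else []))) :
    LSyncL {w : List A | Adm Λ w} k
      ((if s then [a1] else []) ++ μ₀ ++ (if t then [a1] else [])) := by
  have Fact : ∀ u v : List A, u <:+: v → v ∈ {w : List A | Adm Λ w} →
      u ∈ {w : List A | Adm Λ w} := fun u v h1 h2 => adm_infix h1 h2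
  refine lsyncL_of_strong Fact hmem ?_
  intro ρ ω hlen h1 h2
  have hstr := lsyncL_strong (L := tildeLang Λ a1) (fun u v huv hv => tilde_infix huv hv)
    (fun u hu m => tilde_ext_left hu m) h
  have key1 : ((xiB a1 ρ ++ (if s then [none] else [])) ++
      ((if s then [some a1] else []) ++ xiB a1 μ₀ ++ (if t then [none] else []))) ++
      (if t then [some a1] else [])
      = xiB a1 (ρ ++ ((if s then [a1] else []) ++ μ₀ ++ (if t then [a1] else []))) := by
    cases s <;> cases t <;> simp [xiB_append, xiB_a1, xiB_nil, xiB_cons, List.append_assoc]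
  have key2 : (if s then [none] else []) ++
      (((if s then [some a1] else []) ++ xiB a1 μ₀ ++ (if t then [none] else [])) ++
      ((if t then [some a1] else []) ++ xiB a1 ω))
      = xiB a1 (((if s then [a1] else []) ++ μ₀ ++ (if t then [a1] else [])) ++ ω) := by
    cases s <;> cases t <;> simp [xiB_append, xiB_a1, xiB_nil, xiB_cons, List.append_assoc]
  have key3 : (xiB a1 ρ ++ (if s then [none] else [])) ++
      ((if s then [some a1] else []) ++ xiB a1 μ₀ ++ (if t then [none] else [])) ++
      ((if t then [some a1] else []) ++ xiB a1 ω)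
      = xiB a1 (ρ ++ ((if s then [a1] else []) ++ μ₀ ++ (if t then [a1] else [])) ++ ω) := by
    cases s <;> cases t <;> simp [xiB_append, xiB_a1, xiB_nil, xiB_cons, List.append_assoc]
  have m1 : (xiB a1 ρ ++ (if s then [none] else [])) ++
      ((if s then [some a1] else []) ++ xiB a1 μ₀ ++ (if t then [none] else []))
      ∈ tildeLang Λ a1 := by
    refine tilde_infix ⟨[], (if t then [some a1] else []), by simpa using key1⟩
      (xiB_mem_tilde h1)
  have m2 : ((if s then [some a1] else []) ++ xiB a1 μ₀ ++ (if t then [none] else [])) ++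
      ((if t then [some a1] else []) ++ xiB a1 ω) ∈ tildeLang Λ a1 := by
    refine tilde_infix ⟨(if s then [none] else []), [], by simpa using key2⟩
      (xiB_mem_tilde h2)
  have hlent : (xiB a1 ρ ++ (if s then [none] else [])).length ≤ kt := by
    have hx := xiB_length_le a1 ρ
    have hk := Hk ρ.length hlen
    cases s <;> simp only [Bool.false_eq_true, if_false, if_true, List.append_nil,
      List.length_append, List.length_singleton, List.length_cons, List.length_nil] at hk ⊢ <;>
      omega
  have hres := hstr _ _ hlent m1 m2
  rw [key3] at hres
  exact adm_of_xiB_mem a1 hnil hres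
/-! ### The two directions -/

lemma lambdaSync_forward (a1 : A)
    (h : LambdaSyncL {w : List A | Adm Λ w}) : LambdaSyncL (tildeLang Λ a1) := by
  intro ηt k hηt hklen
  obtain ⟨s, t, η, hdec, hadm⟩ := tilde_decomp a1 hηt
  set η' := (if s then [a1] else []) ++ η ++ (if t then [a1] else []) with hη'
  have hη'len : η'.length ≤ ηt.length := by
    have := length_le_xiB a1 η
    cases s <;> cases t <;> simp [hη', hdec] <;> omega
  obtain ⟨ν₁, hν₁, hην₁⟩ := h η' k hadm (hη'len.trans hklen)
  obtain ⟨a, ha⟩ := adm_snoc_right hην₁.1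
  set ν := ν₁ ++ [a] with hν
  have hη'ν : Adm Λ (η' ++ ν) := by rwa [hν, ← List.append_assoc]
  have hνadm : Adm Λ ν := adm_infix ⟨η', [], by simp⟩ hη'ν
  have hνs : LSyncL {w : List A | Adm Λ w} k ν := lsyncL_append hν₁ hνadm
  have hηpara : LSyncL {w : List A | Adm Λ w} (k - η'.length) (η' ++ ν) := by
    have h0 := lsyncL_append hην₁ ha
    rwa [List.append_assoc] at h0
  have FactL : ∀ u v : List A, u <:+: v → v ∈ {w : List A | Adm Λ w} →
      u ∈ {w : List A | Adm Λ w} := fun u v h1 h2 => adm_infix h1 h2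
  have ExtL : ∀ u ∈ {w : List A | Adm Λ w}, ∀ m : ℕ,
      ∃ p : List A, p.length = m ∧ p ++ u ∈ {w : List A | Adm Λ w} :=
    fun u hu m => adm_ext_left hu m
  have strν := lsyncL_strong FactL ExtL hνs
  have strην := lsyncL_strong FactL ExtL hηpara
  have hνne : ν ≠ [] := by simp [hν]
  refine ⟨(if t then [some a1] else []) ++ xiB a1 ν, ?_, ?_⟩
  · -- first component : `k`-synchronizing word of the expansion
    apply lsyncL_tilde_of_sync a1 t ν
    · cases t <;> simp [hν]
    · have hadm2 : Adm Λ ((if t then [a1] else []) ++ ν) := by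
        cases t
        · simpa using hνadm
        · refine adm_infix ⟨(if s then [a1] else []) ++ η, [], ?_⟩ hη'ν
          simp [hη', List.append_assoc]
      refine tilde_infix ?_ (xiB_mem_tilde hadm2)
      cases t
      · simp [xiB_append]
      · refine ⟨[none], [], ?_⟩
        simp [xiB_append, xiB_cons]
    · intro ρ ω hl hA hB
      cases t
      · simp only [Bool.false_eq_true, if_false, List.nil_append, Nat.add_zero] at hl hA hB ⊢
        exact strν ρ ω hl hA hB
      · simp only [if_true] at hl hA hB ⊢
        have hA' : (ρ ++ [a1]) ++ ν ∈ {w : List A | Adm Λ w} := by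
          simpa [List.append_assoc] using hA
        have hB' : ν ++ ω ∈ {w : List A | Adm Λ w} := by
          refine adm_infix ⟨[a1], [], ?_⟩ hB
          simp
        have := strν (ρ ++ [a1]) ω (by simp; omega) hA' hB'
        simpa [List.append_assoc] using this
  · -- second component
    have keyshape : ηt ++ ((if t then [some a1] else []) ++ xiB a1 ν)
        = (if s then [some a1] else []) ++ xiB a1 (η ++ (if t then [a1] else []) ++ ν) := by
      rw [hdec]
      cases s <;> cases t <;> simp [xiB_append, xiB_a1, xiB_cons, List.append_assoc]
    have keyμ : (if s then a1 :: (η ++ (if t then [a1] else []) ++ ν)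
        else (η ++ (if t then [a1] else []) ++ ν)) = η' ++ ν := by
      cases s <;> cases t <;> simp [hη', List.append_assoc]
    rw [keyshape]
    apply lsyncL_tilde_of_sync a1 s (η ++ (if t then [a1] else []) ++ ν)
    · rw [keyμ]
      simp [hν]
    · have hX : Adm Λ (if s then a1 :: (η ++ (if t then [a1] else []) ++ ν)
          else (η ++ (if t then [a1] else []) ++ ν)) := by rw [keyμ]; exact hη'ν
      refine tilde_infix ?_ (xiB_mem_tilde hX)
      cases s
      · simp
      · refine ⟨[none], [], ?_⟩
        simp [xiB_cons]
    · intro ρ ω hl hA hB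
      rw [keyμ] at hA hB ⊢
      refine strην ρ ω ?_ hA hB
      have h1 := hη'len
      have h2 := hklen
      cases s <;> simp at hl <;> omega

lemma lambdaSync_backward (a1 : A)
    (h : LambdaSyncL (tildeLang Λ a1)) : LambdaSyncL {w : List A | Adm Λ w} := by
  intro η k hη hklen
  have hnil : Adm Λ ([] : List A) := adm_nil hη
  have hηt : xiB a1 η ∈ tildeLang Λ a1 := xiB_mem_tilde hη
  have hηtlen : (xiB a1 η).length ≤ 2 * k + 1 := by
    have := xiB_length_le a1 η
    omega
  obtain ⟨νt, hνt, hηνt⟩ := h (xiB a1 η) (2 * k + 1) hηt hηtlen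
  obtain ⟨s₂, t₂, ν₀, hdec, hund⟩ := tilde_decomp a1 hνt.1
  rcases eq_or_ne η [] with rfl | hηne
  · -- case η = []
    have hk : ∀ m : ℕ, m ≤ k → 2 * m + (if s₂ then 1 else 0) ≤ 2 * k + 1 := by
      intro m hm
      cases s₂ <;> simp <;> omega
    have hs := sync_of_lsyncL_tilde a1 s₂ t₂ ν₀ hnil hund hk (by rw [← hdec]; exact hνt)
    refine ⟨(if s₂ then [a1] else []) ++ ν₀ ++ (if t₂ then [a1] else []), hs, ?_⟩
    simpa using hs
  · -- case η ≠ [] : first show s₂ = false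
    have hs₂ : s₂ = false := by
      by_contra hs
      rw [Bool.not_eq_false] at hs
      rw [hs] at hdec
      simp only [if_true] at hdec
      obtain ⟨w, hw, α, β, hab⟩ := hηνt.1
      rw [hdec] at hab
      have hab' : xiB a1 w = (α ++ xiB a1 η) ++
          some a1 :: (xiB a1 ν₀ ++ (if t₂ then [none] else []) ++ β) := by
        rw [← hab]; simp
      obtain ⟨p, w₂, -, hα, -⟩ := some_a1_occ a1 _ _ _ hab'
      obtain ⟨u, b, hub⟩ := xiB_last a1 hηne
      rw [hub, ← List.append_assoc] at hα
      obtain ⟨-, h2⟩ := List.append_inj' hα rfl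
      simp at h2
    rw [hs₂] at hdec hund
    simp only [Bool.false_eq_true, if_false, List.nil_append] at hdec hund
    -- hdec : νt = xiB a1 ν₀ ++ (if t₂ then [none] else [])
    -- hund : Adm Λ (ν₀ ++ (if t₂ then [a1] else []))
    have hην : Adm Λ (η ++ (ν₀ ++ (if t₂ then [a1] else []))) := by
      have hmem2 : xiB a1 (η ++ ν₀) ++ (if t₂ then [none] else []) ∈ tildeLang Λ a1 := by
        have h3 := hηνt.1
        rw [hdec] at h3
        rwa [xiB_append, List.append_assoc]
      cases t₂
      · simp only [Bool.false_eq_true, if_false, List.append_nil] at hmem2 ⊢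
        exact adm_of_xiB_mem a1 hnil hmem2
      · simp only [if_true] at hmem2 ⊢
        rw [← List.append_assoc]
        exact adm_of_xiB_none_mem a1 hmem2
    refine ⟨ν₀ ++ (if t₂ then [a1] else []), ?_, ?_⟩
    · -- LSyncL L k ν
      have hk : ∀ m : ℕ, m ≤ k → 2 * m + (if (false : Bool) then 1 else 0) ≤ 2 * k + 1 := by
        intro m hm; simp; omega
      have hs := sync_of_lsyncL_tilde a1 false t₂ ν₀ hnil (by simpa using hund) hk
        (by simp only [Bool.false_eq_true, if_false, List.nil_append]
            rw [← hdec]; exact hνt)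
      simpa using hs
    · -- LSyncL L (k - |η|) (η ++ ν)
      have hxl : (xiB a1 η).length ≤ 2 * η.length := xiB_length_le a1 η
      have hk : ∀ m : ℕ, m ≤ k - η.length →
          2 * m + (if (false : Bool) then 1 else 0) ≤ 2 * k + 1 - (xiB a1 η).length := by
        intro m hm
        have := length_le_xiB a1 η
        simp
        omega
      have hs := sync_of_lsyncL_tilde a1 false t₂ (η ++ ν₀) hnil
        (by simpa [List.append_assoc] using hην) hk
        (by simp only [Bool.false_eq_true, if_false, List.nil_append]
            rw [xiB_append, List.append_assoc, ← hdec]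
            exact hηνt)
      simpa [List.append_assoc] using hs
end AuxLemmas

/-- an irreducible subshift `Λ` is `λ`-synchronizing iff its expansion
`Λ̃` (replacing the symbol `1 = a1` by `01`) is `λ`-synchronizing. -/
theorem lambdaSync_expansion [TopologicalSpace A] [DiscreteTopology A] [Finite A]
    [DecidableEq A]
    (Λ : Set (ℤ → A)) (hΛ : IsSubshift Λ) (a1 : A) (hirr : IrredShift Λ) :
    LambdaSyncL {w : List A | Adm Λ w} ↔ LambdaSyncL (tildeLang Λ a1) := by
  exact ⟨fun h => lambdaSync_forward a1 h, fun h => lambdaSync_backward a1 h⟩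
end
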